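/- arXiv:1006.0149 — 2 statements merged into one kernel-verified Lean document; each statement's English description precedes it below -/
import Mathlib

section
/- Let n ≥ 1, T > 0, T₀ > 0, λ > 0. Let q : ℝⁿ → ℝ be bounded and continuous and ψ : ℝⁿ → ℝ continuous. Let k₀ : ℝ × ℝⁿ → ℂ be continuous with k₀(s,·) = 0 for s ∉ (0,T₀), vanishing outside a fixed compact set in x, and with s ↦ ‖k₀(s,·)‖_{L²} integrable. Let v : ℝ × ℝⁿ → ℂ be continuously differentiable, twice continuously differentiable in x, vanishing outside a fixed compact set in x, with v(0,·) = 0, and satisfying i ∂ₜv + Δv + q v = − exp(iλ(ψ(x) − λt)) k₀(2λt, x) on [0,T] × ℝⁿ. Then for every t ∈ [0,T], ‖v(t,·)‖_{L²} ≤ (2λ)⁻¹ ∫₀^{T₀} ‖k₀(s,·)‖_{L²} ds. -/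
/-!
Multiply the equation by `conj v`, integrate in `x` and take real parts. After an integration
by parts the Laplacian term `∫ conj v Δv = -Σⱼ ∫ |∂ⱼv|²` is real, and so is the potential term
`∫ q |v|²`; the phase `e^{iλ(ψ - λt)}` has modulus one. Hence, by Cauchy–Schwarz,
`d/dt ‖v(t)‖² ≤ 2 ‖v(t)‖ ‖k₀(2λt)‖`, i.e. `d/dt ‖v(t)‖ ≤ ‖k₀(2λt)‖`. Integrating from `v(0) = 0`
and substituting `s = 2λt` gives the bound, since `k₀(s)` vanishes for `s ≥ T₀`.
-/

open MeasureTheory Complex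

noncomputable section

/-- Partial derivative in the `j`-th coordinate direction of a complex-valued
function on `ℝⁿ`. -/
def pd {n : ℕ} (j : Fin n) (f : EuclideanSpace ℝ (Fin n) → ℂ)
    (x : EuclideanSpace ℝ (Fin n)) : ℂ :=
  fderiv ℝ f x (EuclideanSpace.single j 1)

/-- Euclidean Laplacian `Σⱼ ∂²/∂xⱼ²` of a complex-valued function on `ℝⁿ`. -/
def lapC {n : ℕ} (f : EuclideanSpace ℝ (Fin n) → ℂ)
    (x : EuclideanSpace ℝ (Fin n)) : ℂ :=
  ∑ j, pd j (pd j f) x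

/-- `L²`-norm of a complex-valued function on `ℝⁿ`. -/
def L2norm {n : ℕ} (f : EuclideanSpace ℝ (Fin n) → ℂ) : ℝ :=
  (∫ x, ‖f x‖ ^ 2) ^ (1/2 : ℝ)

open ComplexConjugate Set

section PartialDerivFst

variable {E F : Type*} [NormedAddCommGroup E] [NormedSpace ℝ E] [NormedAddCommGroup F]
  [NormedSpace ℝ F] {v : ℝ × E → F}

theorem DifferentiableAt.hasDerivAt_partial_fst {t : ℝ} {x : E}
    (hv : DifferentiableAt ℝ v (t, x)) :
    HasDerivAt (fun s => v (s, x)) (fderiv ℝ v (t, x) (1, 0)) t :=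
  hv.hasFDerivAt.comp_hasDerivAt t ((hasDerivAt_id t).prodMk (hasDerivAt_const t x))

theorem ContDiff.continuous_deriv_partial_fst (hv : ContDiff ℝ 1 v) :
    Continuous fun p : ℝ × E => deriv (fun s => v (s, p.2)) p.1 := by
  have hd : (fun p : ℝ × E => deriv (fun s => v (s, p.2)) p.1) = fun p => fderiv ℝ v p (1, 0) :=
    funext fun p => (hv.differentiable one_ne_zero p).hasDerivAt_partial_fst.deriv
  rw [hd]
  exact (hv.continuous_fderiv one_ne_zero).clm_apply continuous_const

end PartialDerivFst

section ParametricIntegral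

variable {Y E : Type*} [TopologicalSpace Y] [T2Space Y] [MeasurableSpace Y]
  [OpensMeasurableSpace Y] {μ : Measure Y} [IsFiniteMeasureOnCompacts μ]
  [NormedAddCommGroup E] [NormedSpace ℝ E] [SecondCountableTopologyEither Y E] {K : Set Y}

theorem hasDerivAt_integral_of_continuous_of_compact {F F' : ℝ × Y → E}
    (hF : Continuous F) (hF' : Continuous F')
    (hFF' : ∀ t x, HasDerivAt (fun s => F (s, x)) (F' (t, x)) t) (hK : IsCompact K)
    (hFK : ∀ t, ∀ x ∉ K, F (t, x) = 0) (t₀ : ℝ) :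
    HasDerivAt (fun t => ∫ x, F (t, x) ∂μ) (∫ x, F' (t₀, x) ∂μ) t₀ := by
  have hF'K : ∀ t, ∀ x ∉ K, F' (t, x) = 0 := fun t x hx => by
    have hzero : (fun s => F (s, x)) = fun _ => 0 := funext fun s => hFK s x hx
    exact (hFF' t x).unique (hzero ▸ hasDerivAt_const t 0)
  have hcpt := (isCompact_Icc (a := t₀ - 1) (b := t₀ + 1)).prod hK
  obtain ⟨C, hC⟩ := hcpt.exists_bound_of_continuousOn hF'.continuousOn
  refine (hasDerivAt_integral_of_dominated_loc_of_deriv_le (Metric.ball_mem_nhds t₀ one_pos)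
    (bound := K.indicator fun _ => C)
    (Filter.Eventually.of_forall fun t =>
      (hF.comp (Continuous.prodMk_right t)).aestronglyMeasurable)
    ?_ (hF'.comp (Continuous.prodMk_right t₀)).aestronglyMeasurable ?_ ?_
    (Filter.Eventually.of_forall fun x t _ => hFF' t x)).2
  · exact (hF.comp (Continuous.prodMk_right t₀)).integrable_of_hasCompactSupport
      (HasCompactSupport.intro hK (hFK t₀))
  · refine Filter.Eventually.of_forall fun x t ht => ?_
    by_cases hx : x ∈ K
    · rw [indicator_of_mem hx]
      refine hC (t, x) ⟨?_, hx⟩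
      rw [Metric.mem_ball, Real.dist_eq, abs_lt] at ht
      constructor <;> linarith [ht.1, ht.2]
    · simp [hx, hF'K t x hx]
  · exact (integrable_indicator_iff hK.measurableSet).2 (integrableOn_const hK.measure_ne_top)

end ParametricIntegral

theorem hasDerivAt_integral_norm_sq {Y : Type*} [NormedAddCommGroup Y] [NormedSpace ℝ Y]
    [MeasurableSpace Y] [OpensMeasurableSpace Y] {μ : Measure Y} [IsFiniteMeasureOnCompacts μ]
    {K : Set Y} {v : ℝ × Y → ℂ} (hv : ContDiff ℝ 1 v) (hK : IsCompact K)
    (hvK : ∀ t, ∀ x ∉ K, v (t, x) = 0) (t : ℝ) :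
    HasDerivAt (fun s => ∫ x, ‖v (s, x)‖ ^ 2 ∂μ)
      (∫ x, 2 * (conj (v (t, x)) * deriv (fun s => v (s, x)) t).re ∂μ) t :=
  hasDerivAt_integral_of_continuous_of_compact (F := fun p => ‖v p‖ ^ 2)
    (F' := fun p => 2 * (conj (v p) * deriv (fun s => v (s, p.2)) p.1).re)
    (hv.continuous.norm.pow 2)
    (continuous_const.mul (Complex.continuous_re.comp
      ((continuous_conj.comp hv.continuous).mul hv.continuous_deriv_partial_fst)))
    (fun s x => by
      have hd := (hv.differentiable one_ne_zero (s, x)).hasDerivAt_partial_fst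
      rw [hd.deriv]
      exact hd.norm_sq.congr_deriv (by rw [Complex.inner, mul_comm (conj _)]))
    hK (fun s x hx => by simp [hvK s x hx]) t

theorem Real.sqrt_le_sqrt_add_intervalIntegral_of_hasDerivAt {E E' h : ℝ → ℝ} {a b : ℝ}
    (hab : a ≤ b) (hE : ∀ u ∈ Icc a b, 0 ≤ E u) (hE' : ∀ u ∈ Icc a b, HasDerivAt E (E' u) u)
    (hh : Continuous h) (hh₀ : ∀ u ∈ Ioo a b, 0 ≤ h u)
    (hle : ∀ u ∈ Ioo a b, E' u ≤ 2 * √(E u) * h u) :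
    √(E b) ≤ √(E a) + ∫ u in a..b, h u := by
  refine le_of_forall_pos_le_add fun ε hε => ?_
  have hpos : ∀ u ∈ Icc a b, 0 < E u + ε ^ 2 := fun u hu => by
    have := hE u hu; positivity
  -- `√(E + ε²)` is differentiable even where `E` vanishes.
  have hφ : ∀ u ∈ Icc a b, HasDerivAt (fun w => √(E w + ε ^ 2) - ∫ s in a..w, h s)
      (E' u / (2 * √(E u + ε ^ 2)) - h u) u := fun u hu =>
    (((hE' u hu).add_const _).sqrt (hpos u hu).ne').sub
      (hh.integral_hasStrictDerivAt a u).hasDerivAt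
  have hanti : AntitoneOn (fun w => √(E w + ε ^ 2) - ∫ s in a..w, h s) (Icc a b) := by
    refine antitoneOn_of_hasDerivWithinAt_nonpos (convex_Icc a b)
      (f' := fun u => E' u / (2 * √(E u + ε ^ 2)) - h u)
      (fun u hu => (hφ u hu).continuousAt.continuousWithinAt) (fun u hu => ?_) (fun u hu => ?_)
      <;> rw [interior_Icc] at hu
    · exact (hφ u (Ioo_subset_Icc_self hu)).hasDerivWithinAt
    · rw [sub_nonpos,
        div_le_iff₀ (mul_pos two_pos (Real.sqrt_pos.2 (hpos u (Ioo_subset_Icc_self hu))))]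
      calc E' u ≤ 2 * √(E u) * h u := hle u hu
        _ ≤ 2 * √(E u + ε ^ 2) * h u := by
          gcongr
          · exact hh₀ u hu
          · nlinarith
        _ = h u * (2 * √(E u + ε ^ 2)) := by ring
  have hend := hanti ⟨le_rfl, hab⟩ ⟨hab, le_rfl⟩ hab
  simp only [intervalIntegral.integral_same, sub_zero] at hend
  have hb : √(E b) ≤ √(E b + ε ^ 2) := Real.sqrt_le_sqrt (by nlinarith)
  have ha : √(E a + ε ^ 2) ≤ √(E a) + ε := by
    have hEa := Real.sq_sqrt (hE a ⟨le_rfl, hab⟩)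
    calc √(E a + ε ^ 2) ≤ √((√(E a) + ε) ^ 2) :=
          Real.sqrt_le_sqrt (by nlinarith [Real.sqrt_nonneg (E a)])
      _ = √(E a) + ε := Real.sqrt_sq (by positivity)
  linarith

theorem intervalIntegral_comp_mul_le_of_eqOn_Ici {h : ℝ → ℝ} {c t T₀ : ℝ} (hc : 0 < c)
    (ht : 0 ≤ t) (hh : Continuous h) (h₀ : ∀ s, 0 ≤ h s) (hT₀ : EqOn h 0 (Ici T₀)) :
    ∫ s in 0..t, h (c * s) ≤ c⁻¹ * ∫ s in 0..T₀, h s := by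
  rw [intervalIntegral.integral_comp_mul_left h hc.ne', mul_zero, smul_eq_mul]
  refine mul_le_mul_of_nonneg_left ?_ (inv_nonneg.2 hc.le)
  rcases le_total (c * t) T₀ with hle | hge
  · exact intervalIntegral.integral_mono_interval le_rfl (by positivity) hle
      (Filter.Eventually.of_forall h₀) (hh.intervalIntegrable 0 T₀)
  · have hzero : ∫ s in T₀..c * t, h s = 0 := by
      rw [intervalIntegral.integral_congr (g := fun _ => 0) fun s hs =>
        hT₀ (uIcc_of_le hge ▸ hs).1]
      simp
    rw [← intervalIntegral.integral_add_adjacent_intervals (hh.intervalIntegrable 0 T₀)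
      (hh.intervalIntegrable T₀ (c * t)), hzero, add_zero]

section GreenIdentity

variable {E : Type*} [NormedAddCommGroup E] [NormedSpace ℝ E] [FiniteDimensional ℝ E]
  [MeasurableSpace E] [BorelSpace E] {μ : Measure E} [μ.IsAddHaarMeasure]

theorem integral_conj_mul_fderiv_fderiv {f : E → ℂ} (hf : ContDiff ℝ 2 f)
    (hfc : HasCompactSupport f) (w : E) :
    ∫ x, conj (f x) * fderiv ℝ (fun y => fderiv ℝ f y w) x w ∂μ
      = -∫ x, ((‖fderiv ℝ f x w‖ ^ 2 : ℝ) : ℂ) ∂μ := by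
  set g : E → ℂ := fun y => fderiv ℝ f y w
  have hg : ContDiff ℝ 1 g := (hf.fderiv_right (by norm_num)).clm_apply contDiff_const
  have hgc : HasCompactSupport g := hfc.fderiv_apply ℝ w
  have hconj : ∀ x, fderiv ℝ (fun y => conj (f y)) x w = conj (g x) := fun x =>
    congrArg (· w) (fderiv_star (𝕜 := ℝ) (f := f))
  have hint : ∀ {u v : E → ℂ}, Continuous u → Continuous v → HasCompactSupport v →
      Integrable (fun x => u x * v x) μ := fun hu hv hvc =>
    (hu.mul hv).integrable_of_hasCompactSupport hvc.mul_left
  have hibp := integral_mul_fderiv_eq_neg_fderiv_mul_of_integrable (μ := μ) (v := w)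
    (f := fun y => conj (f y)) (g := g)
    (by simp_rw [hconj]; exact hint (continuous_conj.comp hg.continuous) hg.continuous hgc)
    (hint (continuous_conj.comp hf.continuous) ((hg.continuous_fderiv one_ne_zero).clm_apply
      continuous_const) (hgc.fderiv_apply ℝ w))
    (hint (continuous_conj.comp hf.continuous) hg.continuous hgc)
    (fun x _ => (hf.differentiable (by norm_num)).star x)
    (fun x _ => hg.differentiable one_ne_zero x)
  simp_rw [hibp, hconj, Complex.conj_mul', Complex.ofReal_pow]
  rfl

end GreenIdentity

section Laplacian

variable {n : ℕ} {f : EuclideanSpace ℝ (Fin n) → ℂ}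

theorem ContDiff.continuous_pd_pd (hf : ContDiff ℝ 2 f) (j : Fin n) :
    Continuous (pd j (pd j f)) :=
  (((hf.fderiv_right (by norm_num)).clm_apply contDiff_const).continuous_fderiv
    one_ne_zero).clm_apply continuous_const

theorem ContDiff.continuous_lapC (hf : ContDiff ℝ 2 f) : Continuous (lapC f) :=
  continuous_finsetSum _ fun j _ => hf.continuous_pd_pd j

theorem integral_conj_mul_lapC (hf : ContDiff ℝ 2 f) (hfc : HasCompactSupport f) :
    ∫ x, conj (f x) * lapC f x = -∑ j, ∫ x, ((‖pd j f x‖ ^ 2 : ℝ) : ℂ) := by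
  have hint : ∀ j, Integrable fun x => conj (f x) * pd j (pd j f) x := fun j =>
    Continuous.integrable_of_hasCompactSupport
      ((continuous_conj.comp hf.continuous).mul (hf.continuous_pd_pd j))
      (hfc.comp_left (map_zero _)).mul_right
  simp_rw [lapC, Finset.mul_sum]
  rw [integral_finsetSum _ fun j _ => hint j, ← Finset.sum_neg_distrib]
  exact Finset.sum_congr rfl fun j _ => integral_conj_mul_fderiv_fderiv hf hfc _

theorem im_integral_conj_mul_lapC (hf : ContDiff ℝ 2 f) (hfc : HasCompactSupport f) :
    (∫ x, conj (f x) * lapC f x).im = 0 := by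
  simp only [integral_conj_mul_lapC hf hfc, integral_complex_ofReal, Complex.neg_im,
    Complex.im_sum, Complex.ofReal_im, Finset.sum_const_zero, neg_zero]

end Laplacian

section L2norm

variable {n : ℕ}

theorem L2norm_eq_sqrt (f : EuclideanSpace ℝ (Fin n) → ℂ) : L2norm f = √(∫ x, ‖f x‖ ^ 2) := by
  rw [L2norm, Real.sqrt_eq_rpow]

theorem L2norm_nonneg (f : EuclideanSpace ℝ (Fin n) → ℂ) : 0 ≤ L2norm f := by
  rw [L2norm_eq_sqrt]
  exact Real.sqrt_nonneg _

theorem integral_norm_mul_norm_le_L2norm_mul_L2norm {f g : EuclideanSpace ℝ (Fin n) → ℂ}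
    (hf : MemLp f 2) (hg : MemLp g 2) : ∫ x, ‖f x‖ * ‖g x‖ ≤ L2norm f * L2norm g := by
  have hfg := integral_mul_norm_le_Lp_mul_Lq (f := f) (g := g) Real.HolderConjugate.two_two
    (by rwa [ENNReal.ofReal_ofNat]) (by rwa [ENNReal.ofReal_ofNat])
  simpa only [L2norm, Real.rpow_two] using hfg

theorem continuous_L2norm_of_compact {X : Type*} [TopologicalSpace X] [FirstCountableTopology X]
    [LocallyCompactSpace X] {k : X × EuclideanSpace ℝ (Fin n) → ℂ} (hk : Continuous k)
    {K : Set (EuclideanSpace ℝ (Fin n))} (hK : IsCompact K) (hkK : ∀ s, ∀ x ∉ K, k (s, x) = 0) :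
    Continuous fun s => L2norm fun x => k (s, x) := by
  have hK_int : ∀ s, ∫ x in K, ‖k (s, x)‖ ^ 2 = ∫ x, ‖k (s, x)‖ ^ 2 := fun s =>
    setIntegral_eq_integral_of_forall_compl_eq_zero fun x hx => by simp [hkK s x hx]
  simp_rw [L2norm_eq_sqrt, ← hK_int]
  exact (continuous_parametric_integral_of_continuous (hk.norm.pow 2) hK).sqrt

end L2norm

theorem two_mul_re_conj_mul_le_of_eq {a d L F : ℂ} {q : ℝ} (h : I * d + L + q * a = -F) :
    2 * (conj a * d).re ≤ -2 * (conj a * L).im + 2 * (‖a‖ * ‖F‖) := by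
  have hd : d = I * (L + q * a + F) := by linear_combination (-I) * h + d * Complex.I_sq
  have hF : -(conj a * F).im ≤ ‖a‖ * ‖F‖ := by
    simpa using (neg_le_abs _).trans (Complex.abs_im_le_norm (conj a * F))
  have hre : (conj a * d).re = -(conj a * L).im - (conj a * F).im := by
    subst hd
    simp only [Complex.mul_re, Complex.mul_im, Complex.add_re, Complex.add_im, Complex.I_re,
      Complex.I_im, Complex.conj_re, Complex.conj_im, Complex.ofReal_re, Complex.ofReal_im]
    ring
  linarith

theorem integral_two_mul_re_conj_mul_le {n : ℕ} {f d F g : EuclideanSpace ℝ (Fin n) → ℂ}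
    {q : EuclideanSpace ℝ (Fin n) → ℝ} (hf : ContDiff ℝ 2 f) (hfc : HasCompactSupport f)
    (hd : Continuous d) (hg : Continuous g) (hgc : HasCompactSupport g)
    (hFg : ∀ x, ‖F x‖ ≤ ‖g x‖) (heq : ∀ x, I * d x + lapC f x + q x * f x = -F x) :
    ∫ x, 2 * (conj (f x) * d x).re ≤ 2 * (L2norm f * L2norm g) := by
  have hconj : Continuous fun x => conj (f x) := continuous_conj.comp hf.continuous
  have hconjc : HasCompactSupport fun x => conj (f x) := hfc.comp_left (map_zero _)
  have hlap : Integrable fun x => conj (f x) * lapC f x :=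
    (hconj.mul hf.continuous_lapC).integrable_of_hasCompactSupport hconjc.mul_right
  have hlap_im : ∫ x, (conj (f x) * lapC f x).im = (∫ x, conj (f x) * lapC f x).im :=
    integral_im hlap
  have hfg : Integrable fun x => ‖f x‖ * ‖g x‖ :=
    (hf.continuous.norm.mul hg.norm).integrable_of_hasCompactSupport hfc.norm.mul_right
  have hlap_im_int : Integrable fun x => -2 * (conj (f x) * lapC f x).im :=
    hlap.im.const_mul _
  calc ∫ x, 2 * (conj (f x) * d x).re
      ≤ ∫ x, (-2 * (conj (f x) * lapC f x).im + 2 * (‖f x‖ * ‖g x‖)) := by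
        refine integral_mono ?_ (hlap_im_int.add (hfg.const_mul _)) fun x => ?_
        · exact Continuous.integrable_of_hasCompactSupport
            (continuous_const.mul (Complex.continuous_re.comp (hconj.mul hd)))
            (hconjc.mul_right.comp_left Complex.zero_re).mul_left
        · calc 2 * (conj (f x) * d x).re
              ≤ -2 * (conj (f x) * lapC f x).im + 2 * (‖f x‖ * ‖F x‖) :=
                two_mul_re_conj_mul_le_of_eq (heq x)
            _ ≤ -2 * (conj (f x) * lapC f x).im + 2 * (‖f x‖ * ‖g x‖) := by
                gcongr; exact hFg x
    _ = 2 * ∫ x, ‖f x‖ * ‖g x‖ := by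
        rw [integral_add hlap_im_int (hfg.const_mul _), integral_const_mul,
          integral_const_mul, hlap_im, im_integral_conj_mul_lapC hf hfc, mul_zero, zero_add]
    _ ≤ 2 * (L2norm f * L2norm g) := by
        gcongr
        exact integral_norm_mul_norm_le_L2norm_mul_L2norm
          (hf.continuous.memLp_of_hasCompactSupport hfc) (hg.memLp_of_hasCompactSupport hgc)

theorem stmt8_general {n : ℕ} (T T₀ lam : ℝ)
    (hlam : 0 < lam)
    (q : EuclideanSpace ℝ (Fin n) → ℝ)
    (ψ : EuclideanSpace ℝ (Fin n) → ℝ)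
    (k₀ : ℝ × EuclideanSpace ℝ (Fin n) → ℂ) (hk₀_cont : Continuous k₀)
    (hk₀_supp_t : ∀ s ∉ Set.Ioo (0:ℝ) T₀, ∀ x, k₀ (s, x) = 0)
    (K₁ : Set (EuclideanSpace ℝ (Fin n))) (hK₁ : IsCompact K₁)
    (hk₀_supp_x : ∀ (s : ℝ), ∀ x ∉ K₁, k₀ (s, x) = 0)
    (v : ℝ × EuclideanSpace ℝ (Fin n) → ℂ)
    (hv : ContDiff ℝ 1 v) (hvx : ∀ t : ℝ, ContDiff ℝ 2 (fun x => v (t, x)))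
    (K₂ : Set (EuclideanSpace ℝ (Fin n))) (hK₂ : IsCompact K₂)
    (hv_supp_x : ∀ (t : ℝ), ∀ x ∉ K₂, v (t, x) = 0)
    (hv0 : ∀ x, v (0, x) = 0)
    (hpde : ∀ t ∈ Set.Icc (0:ℝ) T, ∀ x,
      Complex.I * deriv (fun s => v (s, x)) t + lapC (fun y => v (t, y)) x
          + (q x : ℂ) * v (t, x)
        = -(Complex.exp (Complex.I * (lam : ℂ) * ((ψ x : ℂ) - (lam : ℂ) * (t : ℂ)))
            * k₀ (2 * lam * t, x))) :
    ∀ t ∈ Set.Icc (0:ℝ) T,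
      L2norm (fun x => v (t, x))
        ≤ (2 * lam)⁻¹ * ∫ s in (0:ℝ)..T₀, L2norm (fun x => k₀ (s, x)) := by
  intro t ht
  set h : ℝ → ℝ := fun s => L2norm fun x => k₀ (s, x)
  set E : ℝ → ℝ := fun s => ∫ x, ‖v (s, x)‖ ^ 2
  have hh : Continuous h := continuous_L2norm_of_compact hk₀_cont hK₁ hk₀_supp_x
  have henergy : ∀ s ∈ Ioo 0 t, ∫ x, 2 * (conj (v (s, x)) * deriv (fun r => v (r, x)) s).re
      ≤ 2 * √(E s) * h (2 * lam * s) := by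
    intro s hs
    have := integral_two_mul_re_conj_mul_le (d := fun x => deriv (fun r => v (r, x)) s)
      (g := fun x => k₀ (2 * lam * s, x)) (hvx s) (HasCompactSupport.intro hK₂ (hv_supp_x s))
      (hv.continuous_deriv_partial_fst.comp (Continuous.prodMk_right s))
      (hk₀_cont.comp (Continuous.prodMk_right _)) (HasCompactSupport.intro hK₁ (hk₀_supp_x _))
      (fun x => by simp [Complex.norm_exp]) (hpde s ⟨hs.1.le, hs.2.le.trans ht.2⟩)
    rwa [L2norm_eq_sqrt, ← mul_assoc] at this
  have hgronwall := Real.sqrt_le_sqrt_add_intervalIntegral_of_hasDerivAt (E := E)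
    (h := fun s => h (2 * lam * s)) ht.1 (fun s _ => integral_nonneg fun x => by positivity)
    (fun s _ => hasDerivAt_integral_norm_sq hv hK₂ hv_supp_x s)
    (hh.comp (continuous_const.mul continuous_id)) (fun s _ => L2norm_nonneg _) henergy
  have hE0 : E 0 = 0 := by simp [E, hv0]
  rw [hE0, Real.sqrt_zero, zero_add] at hgronwall
  rw [L2norm_eq_sqrt]
  refine hgronwall.trans (intervalIntegral_comp_mul_le_of_eqOn_Ici (by positivity) ht.1 hh
    (fun s => L2norm_nonneg _) fun s hs => ?_)
  have hk : ∀ x, k₀ (s, x) = 0 := hk₀_supp_t s fun hs' => not_lt.2 hs hs'.2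
  simp [h, L2norm_eq_sqrt, hk]

/-- Remainder bound for the geometrical optics solution: if
`i ∂ₜv + Δv + q v = −e^{iλ(ψ(x)−λt)} k₀(2λt, x)` on `[0,T] × ℝⁿ` with `v(0,·) = 0`,
then for `t ∈ [0,T]`, `‖v(t,·)‖_{L²} ≤ (2λ)⁻¹ ∫₀^{T₀} ‖k₀(s,·)‖_{L²} ds`. -/
theorem stmt8 {n : ℕ} (hn : 1 ≤ n) (T T₀ lam : ℝ) (hT : 0 < T) (hT₀ : 0 < T₀)
    (hlam : 0 < lam)
    (q : EuclideanSpace ℝ (Fin n) → ℝ)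
    (hq_bdd : ∃ M : ℝ, ∀ x, |q x| ≤ M) (hq_cont : Continuous q)
    (ψ : EuclideanSpace ℝ (Fin n) → ℝ) (hψ : Continuous ψ)
    (k₀ : ℝ × EuclideanSpace ℝ (Fin n) → ℂ) (hk₀_cont : Continuous k₀)
    (hk₀_supp_t : ∀ s ∉ Set.Ioo (0:ℝ) T₀, ∀ x, k₀ (s, x) = 0)
    (K₁ : Set (EuclideanSpace ℝ (Fin n))) (hK₁ : IsCompact K₁)
    (hk₀_supp_x : ∀ (s : ℝ), ∀ x ∉ K₁, k₀ (s, x) = 0)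
    (hk₀_int : Integrable (fun s : ℝ => L2norm (fun x => k₀ (s, x))))
    (v : ℝ × EuclideanSpace ℝ (Fin n) → ℂ)
    (hv : ContDiff ℝ 1 v) (hvx : ∀ t : ℝ, ContDiff ℝ 2 (fun x => v (t, x)))
    (K₂ : Set (EuclideanSpace ℝ (Fin n))) (hK₂ : IsCompact K₂)
    (hv_supp_x : ∀ (t : ℝ), ∀ x ∉ K₂, v (t, x) = 0)
    (hv0 : ∀ x, v (0, x) = 0)
    (hpde : ∀ t ∈ Set.Icc (0:ℝ) T, ∀ x,
      Complex.I * deriv (fun s => v (s, x)) t + lapC (fun y => v (t, y)) x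
          + (q x : ℂ) * v (t, x)
        = -(Complex.exp (Complex.I * (lam : ℂ) * ((ψ x : ℂ) - (lam : ℂ) * (t : ℂ)))
            * k₀ (2 * lam * t, x))) :
    ∀ t ∈ Set.Icc (0:ℝ) T,
      L2norm (fun x => v (t, x))
        ≤ (2 * lam)⁻¹ * ∫ s in (0:ℝ)..T₀, L2norm (fun x => k₀ (s, x)) :=
  stmt8_general T T₀ lam hlam q ψ k₀ hk₀_cont hk₀_supp_t K₁ hK₁ hk₀_supp_x v hv hvx K₂ hK₂ hv_supp_x
    hv0 hpde
end
end

section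
/- Let n ≥ 1, let v : ℝⁿ → ℂ be twice continuously differentiable and let N : ℝⁿ → ℝⁿ be a continuously differentiable vector field. Then at every point x ∈ ℝⁿ: Re Σₖ ∂ₖv(x) · ∂ₖ( Σⱼ Nⱼ(x) ∂ⱼconj(v)(x) ) = Re Σ_{j,k} ∂ₖNⱼ(x) ∂ₖv(x) ∂ⱼconj(v)(x) + (1/2) div( |∇v|² N )(x) − (1/2) |∇v(x)|² div N(x), where |∇v|² = Σⱼ |∂ⱼv|² and div X = Σⱼ ∂ⱼXⱼ. -/
open Complex

noncomputable section

/-- Partial derivative in the `j`-th coordinate direction of a real-valued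
function on `ℝⁿ`. -/
def pdR {n : ℕ} (j : Fin n) (f : EuclideanSpace ℝ (Fin n) → ℝ)
    (x : EuclideanSpace ℝ (Fin n)) : ℝ :=
  fderiv ℝ f x (EuclideanSpace.single j 1)

/-!
Write `a = ∇v` and `b_{jk} = ∂ₖ∂ⱼv`. By the product rule the left side equals
`Re Σ ∂ₖNⱼ aₖ conj aⱼ + Σⱼ Nⱼ Re Σₖ aₖ conj b_{jk}`. Since second derivatives commute,
`∂ⱼ|∇v|² = 2 Re Σₖ aₖ conj (∂ⱼ aₖ) = 2 Re Σₖ aₖ conj b_{jk}`, so the second sum is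
`½ Σⱼ Nⱼ ∂ⱼ|∇v|² = ½ div(|∇v|² N) - ½ |∇v|² div N`.
-/

section PartialDerivatives

variable {n : ℕ} {x : EuclideanSpace ℝ (Fin n)} (k : Fin n)

lemma pd_mul {f g : EuclideanSpace ℝ (Fin n) → ℂ} (hf : DifferentiableAt ℝ f x)
    (hg : DifferentiableAt ℝ g x) :
    pd k (fun y => f y * g y) x = pd k f x * g x + f x * pd k g x := by
  simp only [pd, fderiv_fun_mul hf hg, add_apply, smul_apply, smul_eq_mul]
  ring

lemma pdR_mul {f g : EuclideanSpace ℝ (Fin n) → ℝ} (hf : DifferentiableAt ℝ f x)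
    (hg : DifferentiableAt ℝ g x) :
    pdR k (fun y => f y * g y) x = pdR k f x * g x + f x * pdR k g x := by
  simp only [pdR, fderiv_fun_mul hf hg, add_apply, smul_apply, smul_eq_mul]
  ring

lemma pd_sum {ι : Type*} {s : Finset ι} {f : ι → EuclideanSpace ℝ (Fin n) → ℂ}
    (hf : ∀ i ∈ s, DifferentiableAt ℝ (f i) x) :
    pd k (fun y => ∑ i ∈ s, f i y) x = ∑ i ∈ s, pd k (f i) x := by
  simp only [pd, fderiv_fun_sum hf, sum_apply]

lemma pdR_sum {ι : Type*} {s : Finset ι} {f : ι → EuclideanSpace ℝ (Fin n) → ℝ}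
    (hf : ∀ i ∈ s, DifferentiableAt ℝ (f i) x) :
    pdR k (fun y => ∑ i ∈ s, f i y) x = ∑ i ∈ s, pdR k (f i) x := by
  simp only [pdR, fderiv_fun_sum hf, sum_apply]

lemma pd_ofReal {f : EuclideanSpace ℝ (Fin n) → ℝ} (hf : DifferentiableAt ℝ f x) :
    pd k (fun y => (f y : ℂ)) x = pdR k f x :=
  congrArg (· (EuclideanSpace.single k 1)) (ofRealCLM.hasFDerivAt.comp x hf.hasFDerivAt).fderiv

lemma pd_conj (f : EuclideanSpace ℝ (Fin n) → ℂ) :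
    pd k (fun y => (starRingEnd ℂ) (f y)) x = (starRingEnd ℂ) (pd k f x) :=
  congrArg (· (EuclideanSpace.single k 1)) (conjLIE.comp_fderiv (f := f))

lemma pdR_norm_sq {f : EuclideanSpace ℝ (Fin n) → ℂ} (hf : DifferentiableAt ℝ f x) :
    pdR k (fun y => ‖f y‖ ^ 2) x = 2 * (f x * (starRingEnd ℂ) (pd k f x)).re := by
  rw [pdR, hf.hasFDerivAt.norm_sq.fderiv, pd, ← Complex.conj_re, map_mul, Complex.conj_conj]
  simp only [smul_apply, ContinuousLinearMap.comp_apply, coe_innerSL_apply, Complex.inner,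
    nsmul_eq_mul, Nat.cast_ofNat, mul_comm (fderiv ℝ f x _)]

lemma pd_sum_ofReal_mul_conj {N : EuclideanSpace ℝ (Fin n) → EuclideanSpace ℝ (Fin n)}
    (hN : DifferentiableAt ℝ N x) {g : Fin n → EuclideanSpace ℝ (Fin n) → ℂ}
    (hg : ∀ j, DifferentiableAt ℝ (g j) x) :
    pd k (fun y => ∑ j, ((N y j : ℝ) : ℂ) * (starRingEnd ℂ) (g j y)) x
      = ∑ j, (pdR k (fun y => N y j) x * (starRingEnd ℂ) (g j x)
        + N x j * (starRingEnd ℂ) (pd k (g j) x)) := by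
  have hNj : ∀ j, DifferentiableAt ℝ (fun y => N y j) x := fun j => by fun_prop
  have hNjc : ∀ j, DifferentiableAt ℝ (fun y => ((N y j : ℝ) : ℂ)) x := fun j =>
    ofRealCLM.differentiableAt.comp x (hNj j)
  have hgc : ∀ j, DifferentiableAt ℝ (fun y => (starRingEnd ℂ) (g j y)) x := fun j =>
    conjCLE.differentiableAt.comp x (hg j)
  rw [pd_sum k fun j _ => (hNjc j).fun_mul (hgc j)]
  refine Finset.sum_congr rfl fun j _ => ?_
  rw [pd_mul k (hNjc j) (hgc j), pd_ofReal k (hNj j), pd_conj]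

variable {v : EuclideanSpace ℝ (Fin n) → ℂ}

lemma differentiable_pd (hv : ContDiff ℝ 2 v) (j : Fin n) : Differentiable ℝ (pd j v) :=
  ((hv.fderiv_right one_add_one_eq_two.le).differentiable one_ne_zero).clm_apply
    (differentiable_const _)

lemma pd_pd_eq_fderiv_fderiv (hv : ContDiff ℝ 2 v) (j : Fin n) :
    pd k (pd j v) x
      = fderiv ℝ (fderiv ℝ v) x (EuclideanSpace.single k 1) (EuclideanSpace.single j 1) := by
  have hdv := (hv.fderiv_right one_add_one_eq_two.le).differentiable one_ne_zero x
  change fderiv ℝ (fun y => fderiv ℝ v y (EuclideanSpace.single j 1)) x _ = _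
  simp [fderiv_clm_apply hdv (differentiableAt_const _)]

lemma pd_pd_comm (hv : ContDiff ℝ 2 v) (j : Fin n) : pd k (pd j v) x = pd j (pd k v) x := by
  rw [pd_pd_eq_fderiv_fderiv k hv, pd_pd_eq_fderiv_fderiv j hv]
  exact hv.contDiffAt.isSymmSndFDerivAt (by simp) _ _

lemma pdR_sum_norm_sq_pd (hv : ContDiff ℝ 2 v) (j : Fin n) :
    pdR j (fun y => ∑ l, ‖pd l v y‖ ^ 2) x
      = 2 * ∑ k, (pd k v x * (starRingEnd ℂ) (pd k (pd j v) x)).re := by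
  rw [pdR_sum j fun l _ => (differentiable_pd hv l x).norm_sq ℝ, Finset.mul_sum]
  refine Finset.sum_congr rfl fun l _ => ?_
  rw [pdR_norm_sq j (differentiable_pd hv l x), pd_pd_comm j hv]

end PartialDerivatives

lemma re_sum_mul_sum_add_ofReal_mul_conj {ι : Type*} [Fintype ι] (a : ι → ℂ)
    (b : ι → ι → ℂ) (N : ι → ℝ) (DN : ι → ι → ℝ) :
    (∑ k, a k * ∑ j, (DN j k * (starRingEnd ℂ) (a j) + N j * (starRingEnd ℂ) (b j k))).re
      = (∑ j, ∑ k, DN j k * a k * (starRingEnd ℂ) (a j)).re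
        + ∑ j, (∑ k, (a k * (starRingEnd ℂ) (b j k)).re) * N j := by
  simp only [Finset.mul_sum, Finset.sum_mul, mul_add, Finset.sum_add_distrib, Complex.add_re,
    Complex.re_sum]
  rw [Finset.sum_comm (f := fun k j => (a k * (DN j k * _)).re),
    Finset.sum_comm (f := fun k j => (a k * (N j * _)).re)]
  congr 1
  all_goals refine Finset.sum_congr rfl fun j _ => Finset.sum_congr rfl fun k _ => ?_
  · ring_nf
  · rw [mul_left_comm, Complex.re_ofReal_mul, mul_comm]

theorem stmt12_general {n : ℕ}
    (v : EuclideanSpace ℝ (Fin n) → ℂ) (hv : ContDiff ℝ 2 v)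
    (N : EuclideanSpace ℝ (Fin n) → EuclideanSpace ℝ (Fin n)) (hN : ContDiff ℝ 1 N) :
    ∀ x : EuclideanSpace ℝ (Fin n),
      (∑ k, pd k v x *
          pd k (fun y => ∑ j, ((N y j : ℝ) : ℂ)
            * pd j (fun z => (starRingEnd ℂ) (v z)) y) x).re
        = (∑ j, ∑ k, ((pdR k (fun y => N y j) x : ℝ) : ℂ) * pd k v x
              * pd j (fun z => (starRingEnd ℂ) (v z)) x).re
          + (1/2 : ℝ) * (∑ j, pdR j (fun y => (∑ l, ‖pd l v y‖ ^ 2) * N y j) x)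
          - (1/2 : ℝ) * (∑ j, ‖pd j v x‖ ^ 2) * (∑ j, pdR j (fun y => N y j) x) := by
  intro x
  have hNx : DifferentiableAt ℝ N x := hN.differentiable one_ne_zero x
  have hNj : ∀ j, DifferentiableAt ℝ (fun y => N y j) x := fun j => by fun_prop
  have hS : DifferentiableAt ℝ (fun y => ∑ l, ‖pd l v y‖ ^ 2) x :=
    DifferentiableAt.fun_sum fun l _ => (differentiable_pd hv l x).norm_sq ℝ
  simp only [pd_conj, pd_sum_ofReal_mul_conj _ hNx fun j => differentiable_pd hv j x,
    pdR_mul _ hS (hNj _), pdR_sum_norm_sq_pd hv]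
  rw [re_sum_mul_sum_add_ofReal_mul_conj]
  simp only [Finset.sum_add_distrib, ← Finset.mul_sum, mul_assoc (2 : ℝ)]
  ring

/-- Euclidean multiplier identity: for `v : ℝⁿ → ℂ` of class `C²` and a `C¹`
vector field `N`,
`Re Σₖ ∂ₖv ∂ₖ(Σⱼ Nⱼ ∂ⱼconj v) = Re Σ_{j,k} ∂ₖNⱼ ∂ₖv ∂ⱼconj v
  + (1/2) div(|∇v|² N) − (1/2) |∇v|² div N` at every point. -/
theorem stmt12 {n : ℕ} (hn : 1 ≤ n)
    (v : EuclideanSpace ℝ (Fin n) → ℂ) (hv : ContDiff ℝ 2 v)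
    (N : EuclideanSpace ℝ (Fin n) → EuclideanSpace ℝ (Fin n)) (hN : ContDiff ℝ 1 N) :
    ∀ x : EuclideanSpace ℝ (Fin n),
      (∑ k, pd k v x *
          pd k (fun y => ∑ j, ((N y j : ℝ) : ℂ)
            * pd j (fun z => (starRingEnd ℂ) (v z)) y) x).re
        = (∑ j, ∑ k, ((pdR k (fun y => N y j) x : ℝ) : ℂ) * pd k v x
              * pd j (fun z => (starRingEnd ℂ) (v z)) x).re
          + (1/2 : ℝ) * (∑ j, pdR j (fun y => (∑ l, ‖pd l v y‖ ^ 2) * N y j) x)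
          - (1/2 : ℝ) * (∑ j, ‖pd j v x‖ ^ 2) * (∑ j, pdR j (fun y => N y j) x) :=
  stmt12_general v hv N hN
end
end
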